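/- Let s ≥ 1/4 and p′ ≥ 1 with p′(s+1/4) > 1, and let S₁ be the trilinear operator with kernel m₁(n₁,n₂,n₃) = ⟨n⟩^s|n| / (⟨n₁⟩^s⟨n₂⟩^s⟨n₃⟩^s ⟨n−n₁⟩^{1/2}⟨n−n₂⟩^{1/2}⟨n−n₃⟩^{1/2}) for n = n₁+n₂+n₃ with nⱼ ≠ n for all j, i.e. S₁(a₁,a₂,a₃)(n) = ∑*_{n₁+n₂+n₃=n} m₁(n₁,n₂,n₃) a₁(n₁)a₂(n₂)a₃(n₃). Then S₁ is bounded from ℓᵖ(ℤ) × ℓᵖ(ℤ) × ℓᵖ(ℤ) to ℓᵖ(ℤ). -/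

import Mathlib

/-!
By Hölder's inequality in `(n₁, n₂)` for each fixed `n`, followed by Fubini, the bound reduces to
`sup_n ∑_{n₁+n₂+n₃=n} m₁^{p'} < ∞`; the nonresonance restriction is simply dropped (for `p = ∞`,
`p' = 1` and the same sum bounds `S₁` directly). Put `t = s p'`, `u = p'/2`. Since `|n| ≤ ⟨n⟩`,
`m₁^{p'} ≤ ⟨n⟩^{t+2u} ∏ⱼ ⟨nⱼ⟩^{-t} ⟨n-nⱼ⟩^{-u}`, and since `⟨n⟩ ≤ 3 maxⱼ ⟨nⱼ⟩` one of the
factors `⟨nⱼ⟩^{-t}` can be exchanged for `3^t ⟨n⟩^{-t}`. After relabelling it remains to show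
`∑_{y,z} ⟨y⟩^{-t} ⟨z⟩^{-t} ⟨y+z⟩^{-u} ⟨n-y⟩^{-u} ⟨n-z⟩^{-u} ≲ ⟨n⟩^{-2u}`, which holds for
`0 < u ≤ 2t` and `t + u/2 > 1` (these are `s ≥ 1/4` and `p'(s + 1/4) > 1`).

This sum is computed first in `z`, then in `y`, each time by the three-well estimate: split `ℤ`
according to the well `wᵢ` nearest to `r`; there `⟨wᵢ - wⱼ⟩ ≤ 2 ⟨r - wⱼ⟩`, so part of the decay
at the other wells is moved onto the distances between the wells, while the decay left in `r`
still sums.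
-/

open MeasureTheory
open scoped ENNReal

/-- The Japanese bracket `⟨x⟩ = (1+x²)^{1/2}`. -/
noncomputable def jb (x : ℝ) : ℝ := Real.sqrt (1 + x ^ 2)

/-- The nonresonant mKdV kernel
`m₁(n₁,n₂,n₃) = ⟨n⟩^s|n| / (⟨n₁⟩^s⟨n₂⟩^s⟨n₃⟩^s⟨n−n₁⟩^{1/2}⟨n−n₂⟩^{1/2}⟨n−n₃⟩^{1/2})`,
`n = n₁+n₂+n₃`. -/
noncomputable def mOne (s : ℝ) (n₁ n₂ n₃ : ℤ) : ℝ :=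
  jb (n₁ + n₂ + n₃ : ℤ) ^ s * |((n₁ + n₂ + n₃ : ℤ) : ℝ)| /
    (jb n₁ ^ s * jb n₂ ^ s * jb n₃ ^ s
      * jb (n₂ + n₃ : ℤ) ^ ((1:ℝ)/2) * jb (n₃ + n₁ : ℤ) ^ ((1:ℝ)/2)
      * jb (n₁ + n₂ : ℤ) ^ ((1:ℝ)/2))

lemma jb_pos (x : ℝ) : 0 < jb x := Real.sqrt_pos.2 (by positivity)

lemma jb_sq (x : ℝ) : jb x ^ 2 = 1 + x ^ 2 := Real.sq_sqrt (by positivity)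

lemma one_le_jb (x : ℝ) : 1 ≤ jb x := Real.one_le_sqrt.2 (by nlinarith)

lemma abs_le_jb (x : ℝ) : |x| ≤ jb x := Real.abs_le_sqrt (by linarith)

lemma jb_neg (x : ℝ) : jb (-x) = jb x := by simp [jb]

lemma jb_le_mul_jb {x y c : ℝ} (hc : 1 ≤ c) (h : |x| ≤ c * |y|) : jb x ≤ c * jb y := by
  refine Real.sqrt_le_iff.2 ⟨by nlinarith [jb_pos y], ?_⟩
  have hx : x ^ 2 ≤ c ^ 2 * y ^ 2 := by
    rw [← sq_abs x, ← sq_abs y, ← mul_pow]; exact pow_le_pow_left₀ (abs_nonneg x) h 2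
  have hc2 : 1 ≤ c ^ 2 := by nlinarith
  rw [mul_pow, jb_sq]
  nlinarith [sq_nonneg y]

lemma jb_le_jb {x y : ℝ} (h : |x| ≤ |y|) : jb x ≤ jb y := by
  simpa using jb_le_mul_jb le_rfl (by simpa using h)

/-- `⟨k⟩^{-r}`, valued in `ℝ≥0∞` so that series of weights need no summability bookkeeping. -/
noncomputable def jbDecay (r : ℝ) (k : ℤ) : ℝ≥0∞ := ENNReal.ofReal (jb k ^ (-r))

lemma jbDecay_zero_left (k : ℤ) : jbDecay 0 k = 1 := by simp [jbDecay]

lemma jbDecay_zero_right (r : ℝ) : jbDecay r 0 = 1 := by simp [jbDecay, jb]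

lemma jbDecay_mul_jbDecay (r r' : ℝ) (k : ℤ) :
    jbDecay r k * jbDecay r' k = jbDecay (r + r') k := by
  rw [jbDecay, jbDecay, jbDecay, ← ENNReal.ofReal_mul (by positivity [jb_pos k]),
    ← Real.rpow_add (jb_pos k), neg_add]

lemma jbDecay_anti {r r' : ℝ} (h : r ≤ r') (k : ℤ) : jbDecay r' k ≤ jbDecay r k :=
  ENNReal.ofReal_le_ofReal (Real.rpow_le_rpow_of_exponent_le (one_le_jb _) (by linarith))

lemma jbDecay_neg (r : ℝ) (k : ℤ) : jbDecay r (-k) = jbDecay r k := by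
  simp [jbDecay, jb_neg]

lemma jbDecay_sub_comm (r : ℝ) (a b : ℤ) : jbDecay r (a - b) = jbDecay r (b - a) := by
  rw [← neg_sub, jbDecay_neg]

lemma jbDecay_rpow (r : ℝ) {q : ℝ} (hq : 0 ≤ q) (k : ℤ) : jbDecay r k ^ q = jbDecay (r * q) k := by
  rw [jbDecay, jbDecay, ENNReal.ofReal_rpow_of_nonneg (by positivity [jb_pos k]) hq,
    ← Real.rpow_mul (jb_pos k).le, neg_mul]

lemma jbDecay_le_of_jb_le_mul {r c : ℝ} (hr : 0 ≤ r) (hc : 0 < c) {a b : ℤ}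
    (h : jb a ≤ c * jb b) : jbDecay r b ≤ ENNReal.ofReal (c ^ r) * jbDecay r a := by
  rw [jbDecay, jbDecay, ← ENNReal.ofReal_mul (by positivity), Real.rpow_neg (jb_pos _).le,
    Real.rpow_neg (jb_pos _).le, ← Real.inv_rpow (jb_pos _).le, ← Real.inv_rpow (jb_pos _).le,
    ← Real.mul_rpow hc.le (inv_nonneg.2 (jb_pos _).le)]
  refine ENNReal.ofReal_le_ofReal (Real.rpow_le_rpow (inv_nonneg.2 (jb_pos _).le) ?_ hr)
  rw [← div_eq_mul_inv, le_div_iff₀ (jb_pos _), inv_mul_eq_div, div_le_iff₀ (jb_pos _)]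
  linarith [mul_comm c (jb b)]

lemma jbDecay_le_of_abs_le {r : ℝ} (hr : 0 ≤ r) {a b : ℤ} (h : |a| ≤ |b|) :
    jbDecay r b ≤ jbDecay r a := by
  simpa using jbDecay_le_of_jb_le_mul hr one_pos (c := 1) (a := a) (b := b)
    (by rw [one_mul]; exact jb_le_jb (by exact_mod_cast h))

lemma tsum_jbDecay_ne_top {r : ℝ} (hr : 1 < r) : ∑' k : ℤ, jbDecay r k ≠ ∞ := by
  have hs : Summable fun k : ℤ => jb k ^ (-r) := by
    refine (Real.summable_abs_int_rpow hr).of_norm_bounded_eventually ?_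
    filter_upwards [Filter.eventually_cofinite_ne 0] with k hk
    rw [Real.norm_of_nonneg (by positivity [jb_pos k])]
    have : (1 : ℝ) ≤ |(k : ℝ)| := by exact_mod_cast Int.one_le_abs hk
    exact Real.rpow_le_rpow_of_nonpos (by linarith) (abs_le_jb _) (by linarith)
  unfold jbDecay
  rw [← ENNReal.ofReal_tsum_of_nonneg (fun k => by positivity [jb_pos k]) hs]
  exact ENNReal.ofReal_ne_top

lemma tsum_comp_sub_right {G : Type*} [AddGroup G] (f : G → ℝ≥0∞) (c : G) :
    ∑' k, f (k - c) = ∑' k, f k :=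
  (Equiv.subRight c).tsum_eq f

section Wells

variable {β₁ β₂ β₃ : ℝ}

lemma jbDecay_le_of_nearer {β e : ℝ} (he : e ∈ Set.Icc 0 β) {r w₁ w₂ : ℤ}
    (h : |r - w₁| ≤ |r - w₂|) :
    jbDecay β (r - w₂) ≤
      ENNReal.ofReal (2 ^ (β - e)) * jbDecay (β - e) (w₁ - w₂) * jbDecay e (r - w₂) := by
  have hsep : jb ((w₁ - w₂ : ℤ) : ℝ) ≤ 2 * jb ((r - w₂ : ℤ) : ℝ) := by
    refine jb_le_mul_jb one_le_two ?_
    have := abs_sub_le w₁ r w₂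
    rw [abs_sub_comm w₁ r] at this
    exact_mod_cast (by linarith : |w₁ - w₂| ≤ 2 * |r - w₂|)
  calc jbDecay β (r - w₂) = jbDecay (β - e) (r - w₂) * jbDecay e (r - w₂) := by
        rw [jbDecay_mul_jbDecay, sub_add_cancel]
    _ ≤ _ := by
        gcongr
        exact jbDecay_le_of_jb_le_mul (by linarith [he.2]) two_pos hsep

lemma tsum_jbDecay_mul_jbDecay_mul_jbDecay_le (h₁ : 0 ≤ β₁) (h₂ : 0 ≤ β₂) (h₃ : 0 ≤ β₃)
    (w₁ w₂ w₃ : ℤ) :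
    ∑' r : ℤ, jbDecay β₁ (r - w₁) * jbDecay β₂ (r - w₂) * jbDecay β₃ (r - w₃) ≤
      3 * ∑' k : ℤ, jbDecay (β₁ + β₂ + β₃) k := by
  have hpt : ∀ a b c : ℤ, jbDecay β₁ a * jbDecay β₂ b * jbDecay β₃ c ≤
      jbDecay (β₁ + β₂ + β₃) a + jbDecay (β₁ + β₂ + β₃) b + jbDecay (β₁ + β₂ + β₃) c := by
    intro a b c
    -- every factor is largest at the argument of least absolute value
    obtain ⟨m, hm, hmin⟩ := Finset.exists_min_image {a, b, c} (fun x : ℤ => |x|) (by simp)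
    have hle : jbDecay β₁ a * jbDecay β₂ b * jbDecay β₃ c ≤ jbDecay (β₁ + β₂ + β₃) m := by
      rw [← jbDecay_mul_jbDecay, ← jbDecay_mul_jbDecay]
      gcongr <;> exact jbDecay_le_of_abs_le ‹_› (hmin _ (by simp))
    simp only [Finset.mem_insert, Finset.mem_singleton] at hm
    rcases hm with rfl | rfl | rfl
    · exact le_add_right (le_add_right hle)
    · exact le_add_right (le_add_left hle)
    · exact le_add_left hle
  calc _ ≤ ∑' r : ℤ, (jbDecay (β₁ + β₂ + β₃) (r - w₁) + jbDecay (β₁ + β₂ + β₃) (r - w₂) +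
        jbDecay (β₁ + β₂ + β₃) (r - w₃)) := ENNReal.tsum_le_tsum fun r => hpt _ _ _
    _ = 3 * ∑' k : ℤ, jbDecay (β₁ + β₂ + β₃) k := by
        simp only [ENNReal.tsum_add, tsum_comp_sub_right]
        ring

lemma tsum_ite_nearest_le {e₂ e₃ : ℝ} (hβ₁ : 0 ≤ β₁) (h₂ : e₂ ∈ Set.Icc 0 β₂)
    (h₃ : e₃ ∈ Set.Icc 0 β₃) (w₁ w₂ w₃ : ℤ) :
    ∑' r : ℤ, (if |r - w₁| ≤ |r - w₂| ∧ |r - w₁| ≤ |r - w₃| then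
        jbDecay β₁ (r - w₁) * jbDecay β₂ (r - w₂) * jbDecay β₃ (r - w₃) else 0) ≤
      ENNReal.ofReal (2 ^ (β₂ - e₂)) * ENNReal.ofReal (2 ^ (β₃ - e₃)) *
          (3 * ∑' k : ℤ, jbDecay (β₁ + e₂ + e₃) k) *
        (jbDecay (β₂ - e₂) (w₁ - w₂) * jbDecay (β₃ - e₃) (w₁ - w₃)) := by
  set K₂ := ENNReal.ofReal (2 ^ (β₂ - e₂)) * jbDecay (β₂ - e₂) (w₁ - w₂)
  set K₃ := ENNReal.ofReal (2 ^ (β₃ - e₃)) * jbDecay (β₃ - e₃) (w₁ - w₃)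
  calc _ ≤ ∑' r : ℤ,
        K₂ * K₃ * (jbDecay β₁ (r - w₁) * jbDecay e₂ (r - w₂) * jbDecay e₃ (r - w₃)) := by
        refine ENNReal.tsum_le_tsum fun r => ?_
        split_ifs with h
        · calc _ ≤ jbDecay β₁ (r - w₁) * (K₂ * jbDecay e₂ (r - w₂)) *
                (K₃ * jbDecay e₃ (r - w₃)) := by
                gcongr
                exacts [jbDecay_le_of_nearer h₂ h.1, jbDecay_le_of_nearer h₃ h.2]
            _ = _ := by ring
        · exact zero_le
    _ = K₂ * K₃ * ∑' r : ℤ, jbDecay β₁ (r - w₁) * jbDecay e₂ (r - w₂) * jbDecay e₃ (r - w₃) :=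
        ENNReal.tsum_mul_left
    _ ≤ K₂ * K₃ * (3 * ∑' k : ℤ, jbDecay (β₁ + e₂ + e₃) k) := by
        gcongr; exact tsum_jbDecay_mul_jbDecay_mul_jbDecay_le hβ₁ h₂.1 h₃.1 _ _ _
    _ = _ := by ring

lemma jbDecay_mul_jbDecay_mul_jbDecay_le_ite_nearest (r w₁ w₂ w₃ : ℤ) :
    jbDecay β₁ (r - w₁) * jbDecay β₂ (r - w₂) * jbDecay β₃ (r - w₃) ≤
      (if |r - w₁| ≤ |r - w₂| ∧ |r - w₁| ≤ |r - w₃| then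
        jbDecay β₁ (r - w₁) * jbDecay β₂ (r - w₂) * jbDecay β₃ (r - w₃) else 0) +
      (if |r - w₂| ≤ |r - w₁| ∧ |r - w₂| ≤ |r - w₃| then
        jbDecay β₂ (r - w₂) * jbDecay β₁ (r - w₁) * jbDecay β₃ (r - w₃) else 0) +
      (if |r - w₃| ≤ |r - w₁| ∧ |r - w₃| ≤ |r - w₂| then
        jbDecay β₃ (r - w₃) * jbDecay β₁ (r - w₁) * jbDecay β₂ (r - w₂) else 0) := by
  have : (|r - w₁| ≤ |r - w₂| ∧ |r - w₁| ≤ |r - w₃|) ∨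
      (|r - w₂| ≤ |r - w₁| ∧ |r - w₂| ≤ |r - w₃|) ∨
      (|r - w₃| ≤ |r - w₁| ∧ |r - w₃| ≤ |r - w₂|) := by
    generalize |r - w₁| = a, |r - w₂| = b, |r - w₃| = c
    omega
  rcases this with h | h | h
  · rw [if_pos h]; exact le_add_right (le_add_right le_rfl)
  · rw [if_pos h]; exact le_add_right (le_add_left (le_of_eq (by ring)))
  · rw [if_pos h]; exact le_add_left (le_of_eq (by ring))

/-- Where `r` is nearest to `wᵢ`, the well `j` keeps the exponent `eⱼᵢ` in `r - wⱼ` and moves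
`βⱼ - eⱼᵢ` onto `wᵢ - wⱼ`. -/
theorem exists_tsum_jbDecay_three_wells_le {e₂₁ e₃₁ e₁₂ e₃₂ e₁₃ e₂₃ : ℝ}
    (h₂₁ : e₂₁ ∈ Set.Icc 0 β₂) (h₃₁ : e₃₁ ∈ Set.Icc 0 β₃) (h₁₂ : e₁₂ ∈ Set.Icc 0 β₁)
    (h₃₂ : e₃₂ ∈ Set.Icc 0 β₃) (h₁₃ : e₁₃ ∈ Set.Icc 0 β₁) (h₂₃ : e₂₃ ∈ Set.Icc 0 β₂)
    (h₁ : 1 < β₁ + e₂₁ + e₃₁) (h₂ : 1 < β₂ + e₁₂ + e₃₂) (h₃ : 1 < β₃ + e₁₃ + e₂₃) :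
    ∃ C ≠ ∞, ∀ w₁ w₂ w₃ : ℤ,
      ∑' r : ℤ, jbDecay β₁ (r - w₁) * jbDecay β₂ (r - w₂) * jbDecay β₃ (r - w₃) ≤
        C * (jbDecay (β₂ - e₂₁) (w₁ - w₂) * jbDecay (β₃ - e₃₁) (w₁ - w₃) +
          jbDecay (β₁ - e₁₂) (w₂ - w₁) * jbDecay (β₃ - e₃₂) (w₂ - w₃) +
          jbDecay (β₁ - e₁₃) (w₃ - w₁) * jbDecay (β₂ - e₂₃) (w₃ - w₂)) := by
  have := tsum_jbDecay_ne_top h₁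
  have := tsum_jbDecay_ne_top h₂
  have := tsum_jbDecay_ne_top h₃
  set K₁ := ENNReal.ofReal (2 ^ (β₂ - e₂₁)) * ENNReal.ofReal (2 ^ (β₃ - e₃₁)) *
    (3 * ∑' k : ℤ, jbDecay (β₁ + e₂₁ + e₃₁) k)
  set K₂ := ENNReal.ofReal (2 ^ (β₁ - e₁₂)) * ENNReal.ofReal (2 ^ (β₃ - e₃₂)) *
    (3 * ∑' k : ℤ, jbDecay (β₂ + e₁₂ + e₃₂) k)
  set K₃ := ENNReal.ofReal (2 ^ (β₁ - e₁₃)) * ENNReal.ofReal (2 ^ (β₂ - e₂₃)) *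
    (3 * ∑' k : ℤ, jbDecay (β₃ + e₁₃ + e₂₃) k)
  refine ⟨K₁ + K₂ + K₃, by finiteness, fun w₁ w₂ w₃ => ?_⟩
  calc _ ≤ _ := ENNReal.tsum_le_tsum fun r =>
        jbDecay_mul_jbDecay_mul_jbDecay_le_ite_nearest r w₁ w₂ w₃
    _ = _ := by rw [ENNReal.tsum_add, ENNReal.tsum_add]
    _ ≤ K₁ * (jbDecay (β₂ - e₂₁) (w₁ - w₂) * jbDecay (β₃ - e₃₁) (w₁ - w₃)) +
        K₂ * (jbDecay (β₁ - e₁₂) (w₂ - w₁) * jbDecay (β₃ - e₃₂) (w₂ - w₃)) +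
        K₃ * (jbDecay (β₁ - e₁₃) (w₃ - w₁) * jbDecay (β₂ - e₂₃) (w₃ - w₂)) := by
        gcongr
        · exact tsum_ite_nearest_le (le_trans h₁₂.1 h₁₂.2) h₂₁ h₃₁ w₁ w₂ w₃
        · exact tsum_ite_nearest_le (le_trans h₂₁.1 h₂₁.2) h₁₂ h₃₂ w₂ w₁ w₃
        · exact tsum_ite_nearest_le (le_trans h₃₁.1 h₃₁.2) h₁₃ h₂₃ w₃ w₁ w₂
    _ ≤ _ := by
        rw [mul_add, mul_add]
        gcongr <;> simp only [self_le_add_right, self_le_add_left, le_add_right]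

end Wells

lemma exists_tsum_jbDecay_three_wells_le' {a u k ι : ℝ} (hk : k ∈ Set.Icc 0 u)
    (hι : ι ∈ Set.Icc 0 a) (hak : 1 < a + k) (huι : 1 < u + ι) :
    ∃ C ≠ ∞, ∀ w₁ w₂ w₃ : ℤ,
      ∑' r : ℤ, jbDecay a (r - w₁) * jbDecay u (r - w₂) * jbDecay u (r - w₃) ≤
        C * (jbDecay (u - k) (w₁ - w₂) * jbDecay u (w₁ - w₃) +
          jbDecay (a - ι) (w₂ - w₁) * jbDecay u (w₂ - w₃) +
          jbDecay (a - ι) (w₃ - w₁) * jbDecay u (w₃ - w₂)) := by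
  have hu : (0 : ℝ) ∈ Set.Icc 0 u := ⟨le_rfl, hk.1.trans hk.2⟩
  simpa only [sub_zero, add_zero] using exists_tsum_jbDecay_three_wells_le hk hu hι hu hι hu
    (by linarith) (by linarith) (by linarith)

lemma exists_tsum_jbDecay_mul_jbDecay_le {a b : ℝ} (ha : 1 < a) (hb : b ∈ Set.Icc 0 a) :
    ∃ C ≠ ∞, ∀ n : ℤ, ∑' y : ℤ, jbDecay a y * jbDecay b (y - n) ≤ C * jbDecay b n := by
  -- three wells at `0`, `n`, `0`, the last one with exponent `0`
  obtain ⟨C, hC, h⟩ := exists_tsum_jbDecay_three_wells_le (β₃ := 0) (e₂₁ := 0) (e₃₁ := 0)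
    (e₁₂ := a - b) (e₃₂ := 0) (e₁₃ := a) (e₂₃ := 0) (by simpa using hb.1) (by simp)
    (by constructor <;> linarith [hb.1, hb.2]) (by simp) (by constructor <;> linarith)
    (by simpa using hb.1) (by linarith) (by linarith) (by linarith)
  refine ⟨3 * C, by finiteness, fun n => ?_⟩
  have := h 0 n 0
  simp only [sub_zero, zero_sub, sub_self, sub_sub_cancel, jbDecay_neg, jbDecay_zero_left,
    jbDecay_zero_right, mul_one, one_mul] at this
  exact this.trans_eq (by ring)

lemma exists_tsum_jbDecay_mul_jbDecay_sub_mul_jbDecay_add_le {a u k ι γ : ℝ}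
    (hk : k ∈ Set.Icc 0 u) (hι : ι ∈ Set.Icc 0 a) (hak : 1 < a + k) (huι : 1 < u + ι)
    (hγk : γ ≤ 2 * u - k) (hγι : γ ≤ a - ι + u) :
    ∃ C ≠ ∞, ∀ n : ℤ,
      ∑' y : ℤ, jbDecay a y * jbDecay u (y - n) * jbDecay u (y + n) ≤ C * jbDecay γ n := by
  obtain ⟨C, hC, h⟩ := exists_tsum_jbDecay_three_wells_le' hk hι hak huι
  refine ⟨3 * C, by finiteness, fun n => ?_⟩
  have hnn : jbDecay u (n + n) ≤ jbDecay u n :=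
    jbDecay_le_of_abs_le (hk.1.trans hk.2) <| by
      rw [← two_mul, abs_mul, abs_two]; linarith [abs_nonneg n]
  have hn := h 0 n (-n)
  simp only [sub_zero, sub_neg_eq_add, zero_sub, zero_add, neg_sub_left, jbDecay_neg] at hn
  refine hn.trans ?_
  calc _ ≤ C * (jbDecay γ n + jbDecay γ n + jbDecay γ n) := by
        gcongr
        · rw [jbDecay_mul_jbDecay]; exact jbDecay_anti (by linarith) n
        all_goals calc _ ≤ jbDecay (a - ι) n * jbDecay u n := by gcongr
          _ ≤ _ := by rw [jbDecay_mul_jbDecay]; exact jbDecay_anti hγι n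
    _ = 3 * C * jbDecay γ n := by ring

noncomputable def pairWeight (t u : ℝ) (n : ℤ) (q : ℤ × ℤ) : ℝ≥0∞ :=
  jbDecay t q.1 * jbDecay t q.2 * jbDecay u (q.1 + q.2) * jbDecay u (n - q.1) * jbDecay u (n - q.2)

lemma tsum_pairWeight_eq (t u : ℝ) (n : ℤ) :
    ∑' q : ℤ × ℤ, pairWeight t u n q = ∑' y : ℤ, jbDecay t y * jbDecay u (y - n) *
      ∑' z : ℤ, jbDecay t z * jbDecay u (z + y) * jbDecay u (z - n) := by
  rw [ENNReal.tsum_prod']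
  refine tsum_congr fun y => ?_
  rw [← ENNReal.tsum_mul_left]
  refine tsum_congr fun z => ?_
  rw [pairWeight, jbDecay_sub_comm u n y, jbDecay_sub_comm u n z, add_comm y z]
  ring

section PairSum

variable {t u : ℝ}

/-- `κ` and `ι` are the exponents kept in the summation variable by the wells of exponent `u`
and `t` respectively in the proof of `exists_tsum_pairWeight_le`. -/
lemma exists_trade_exponents (hu : 0 < u) (hut : u ≤ 2 * t) (hθ : 1 < t + u / 2) :
    ∃ κ ι : ℝ, κ ∈ Set.Icc 0 u ∧ 0 ≤ ι ∧ 1 < t + κ ∧ 1 < u + ι ∧ κ + ι ≤ t ∧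
      u + 2 * ι ≤ 2 * t := by
  obtain ⟨η, hη, hη₁, hη₂⟩ : ∃ η : ℝ, 0 < η ∧ 2 * η ≤ t + u / 2 - 1 ∧ 2 * η ≤ u :=
    ⟨min (t + u / 2 - 1) u / 2, half_pos (lt_min (by linarith) hu),
      by linarith [min_le_left (t + u / 2 - 1) u], by linarith [min_le_right (t + u / 2 - 1) u]⟩
  rcases le_total t 1 with ht | ht <;> rcases lt_or_ge 1 u with hu1 | hu1
  · exact ⟨1 - t + η, 0, ⟨by linarith, by linarith⟩, le_rfl, by linarith, by linarith,
      by linarith, by linarith⟩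
  · exact ⟨1 - t + η, 1 - u + η, ⟨by linarith, by linarith⟩, by linarith, by linarith,
      by linarith, by linarith, by linarith⟩
  · exact ⟨η, 0, ⟨by linarith, by linarith⟩, le_rfl, by linarith, by linarith, by linarith,
      by linarith⟩
  · exact ⟨η, 1 - u + η, ⟨by linarith, by linarith⟩, by linarith, by linarith, by linarith,
      by linarith, by linarith⟩

theorem exists_tsum_pairWeight_le (hu : 0 < u) (hut : u ≤ 2 * t) (hθ : 1 < t + u / 2) :
    ∃ C ≠ ∞, ∀ n : ℤ, ∑' q : ℤ × ℤ, pairWeight t u n q ≤ C * jbDecay (2 * u) n := by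
  obtain ⟨κ, ι, hκ, hι, htκ, huι, hκι, hι₂⟩ := exists_trade_exponents hu hut hθ
  have hιt : ι ∈ Set.Icc 0 t := ⟨hι, by linarith [hκ.1]⟩
  obtain ⟨Cz, hCz, hZ⟩ := exists_tsum_jbDecay_three_wells_le' hκ hιt htκ huι
  obtain ⟨C₁, hC₁, h₁⟩ := exists_tsum_jbDecay_mul_jbDecay_le (a := t + (u - κ)) (b := u)
    (by linarith) ⟨hu.le, by linarith⟩
  obtain ⟨C₂, hC₂, h₂⟩ := exists_tsum_jbDecay_mul_jbDecay_sub_mul_jbDecay_add_le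
    (a := t + (t - ι)) (k := 0) (γ := 2 * u) ⟨le_rfl, hu.le⟩ ⟨hι, by linarith⟩ (by linarith) huι
    (by linarith) (by linarith)
  obtain ⟨C₃, hC₃, h₃⟩ := exists_tsum_jbDecay_mul_jbDecay_sub_mul_jbDecay_add_le
    (γ := 2 * u - (t - ι)) hκ hιt htκ huι (by linarith) (by linarith)
  refine ⟨Cz * (C₁ + C₂ + C₃), by finiteness, fun n => ?_⟩
  have hZn (y : ℤ) : ∑' z : ℤ, jbDecay t z * jbDecay u (z + y) * jbDecay u (z - n) ≤
      Cz * (jbDecay (u - κ) y * jbDecay u n + jbDecay (t - ι) y * jbDecay u (y + n) +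
        jbDecay (t - ι) n * jbDecay u (y + n)) := by
    simpa only [sub_zero, sub_neg_eq_add, zero_sub, zero_add, neg_sub_left, jbDecay_neg,
      add_comm n y] using hZ 0 (-y) n
  calc _ = _ := tsum_pairWeight_eq t u n
    _ ≤ ∑' y : ℤ, jbDecay t y * jbDecay u (y - n) *
        (Cz * (jbDecay (u - κ) y * jbDecay u n + jbDecay (t - ι) y * jbDecay u (y + n) +
          jbDecay (t - ι) n * jbDecay u (y + n))) := by
        gcongr with y; exact hZn y
    _ = Cz * ((∑' y : ℤ, jbDecay (t + (u - κ)) y * jbDecay u (y - n)) * jbDecay u n +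
        ∑' y : ℤ, jbDecay (t + (t - ι)) y * jbDecay u (y - n) * jbDecay u (y + n) +
        jbDecay (t - ι) n * ∑' y : ℤ, jbDecay t y * jbDecay u (y - n) * jbDecay u (y + n)) := by
        simp only [← ENNReal.tsum_mul_left, ← ENNReal.tsum_mul_right, ← ENNReal.tsum_add,
          ← jbDecay_mul_jbDecay]
        exact tsum_congr fun y => by ring
    _ ≤ Cz * (C₁ * jbDecay u n * jbDecay u n + C₂ * jbDecay (2 * u) n +
        jbDecay (t - ι) n * (C₃ * jbDecay (2 * u - (t - ι)) n)) := by
        gcongr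
        exacts [h₁ n, h₂ n, h₃ n]
    _ = Cz * (C₁ + C₂ + C₃) * jbDecay (2 * u) n := by
        rw [mul_assoc C₁, jbDecay_mul_jbDecay, mul_left_comm, jbDecay_mul_jbDecay,
          add_sub_cancel, ← two_mul]
        ring

end PairSum

lemma jbDecay_mul_jbDecay_mul_jbDecay_le_jbDecay_add {t : ℝ} (ht : 0 ≤ t) (a b c : ℤ) :
    jbDecay t a * jbDecay t b * jbDecay t c ≤ ENNReal.ofReal (3 ^ t) * jbDecay t (a + b + c) *
      (jbDecay t b * jbDecay t c + jbDecay t a * jbDecay t c + jbDecay t a * jbDecay t b) := by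
  -- the argument of largest absolute value carries the decay of the sum
  obtain ⟨m, hm, hmax⟩ := Finset.exists_max_image {a, b, c} (fun x : ℤ => |x|) (by simp)
  have hsum : |a + b + c| ≤ 3 * |m| := by
    have := abs_add_le (a + b) c
    have := abs_add_le a b
    linarith [hmax a (by simp), hmax b (by simp), hmax c (by simp)]
  have hm' : jbDecay t m ≤ ENNReal.ofReal (3 ^ t) * jbDecay t (a + b + c) :=
    jbDecay_le_of_jb_le_mul ht three_pos (jb_le_mul_jb (by norm_num) (by exact_mod_cast hsum))
  simp only [Finset.mem_insert, Finset.mem_singleton] at hm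
  rcases hm with rfl | rfl | rfl
  · calc _ = jbDecay t m * (jbDecay t b * jbDecay t c) := by ring
      _ ≤ _ := by gcongr; exact le_add_right (le_add_right le_rfl)
  · calc _ = jbDecay t m * (jbDecay t a * jbDecay t c) := by ring
      _ ≤ _ := by gcongr; exact le_add_right (le_add_left le_rfl)
  · calc _ = jbDecay t m * (jbDecay t a * jbDecay t b) := by ring
      _ ≤ _ := by gcongr; exact le_add_left le_rfl

lemma tsum_comp_sub_sub_fst (f : ℤ × ℤ → ℝ≥0∞) (n : ℤ) :
    ∑' q : ℤ × ℤ, f (n - q.1 - q.2, q.2) = ∑' q, f q :=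
  (Function.Involutive.toPerm (fun q : ℤ × ℤ => (n - q.1 - q.2, q.2))
    fun q => by ext <;> simp; ring).tsum_eq f

lemma tsum_comp_sub_sub_snd (f : ℤ × ℤ → ℝ≥0∞) (n : ℤ) :
    ∑' q : ℤ × ℤ, f (q.1, n - q.1 - q.2) = ∑' q, f q :=
  (Function.Involutive.toPerm (fun q : ℤ × ℤ => (q.1, n - q.1 - q.2))
    fun q => by ext <;> simp).tsum_eq f

noncomputable def kernelWeight (t u : ℝ) (n : ℤ) (q : ℤ × ℤ) : ℝ≥0∞ :=
  jbDecay t q.1 * jbDecay t q.2 * jbDecay t (n - q.1 - q.2) *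
    jbDecay u (n - q.1) * jbDecay u (n - q.2) * jbDecay u (q.1 + q.2)

theorem exists_tsum_kernelWeight_le {t u : ℝ} (hu : 0 < u) (hut : u ≤ 2 * t)
    (hθ : 1 < t + u / 2) :
    ∃ C ≠ ∞, ∀ n : ℤ, ∑' q : ℤ × ℤ, kernelWeight t u n q ≤ C * jbDecay (t + 2 * u) n := by
  obtain ⟨C, hC, h⟩ := exists_tsum_pairWeight_le hu hut hθ
  refine ⟨ENNReal.ofReal (3 ^ t) * (3 * C), by finiteness, fun n => ?_⟩
  have hpt (q : ℤ × ℤ) : kernelWeight t u n q ≤ ENNReal.ofReal (3 ^ t) * jbDecay t n *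
      (pairWeight t u n (n - q.1 - q.2, q.2) + pairWeight t u n (q.1, n - q.1 - q.2) +
        pairWeight t u n q) := by
    obtain ⟨y, z⟩ := q
    have hsplit := jbDecay_mul_jbDecay_mul_jbDecay_le_jbDecay_add (by linarith) y z (n - y - z)
    rw [show y + z + (n - y - z) = n by ring] at hsplit
    simp only [kernelWeight, pairWeight, show n - y - z + z = n - y by ring,
      show n - (n - y - z) = y + z by ring, show y + (n - y - z) = n - z by ring]
    calc _ = jbDecay t y * jbDecay t z * jbDecay t (n - y - z) *
          (jbDecay u (n - y) * jbDecay u (n - z) * jbDecay u (y + z)) := by ring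
      _ ≤ ENNReal.ofReal (3 ^ t) * jbDecay t n * (jbDecay t z * jbDecay t (n - y - z) +
            jbDecay t y * jbDecay t (n - y - z) + jbDecay t y * jbDecay t z) *
          (jbDecay u (n - y) * jbDecay u (n - z) * jbDecay u (y + z)) := by gcongr
      _ = _ := by ring
  calc _ ≤ _ := ENNReal.tsum_le_tsum hpt
    _ = ENNReal.ofReal (3 ^ t) * jbDecay t n * (3 * ∑' q : ℤ × ℤ, pairWeight t u n q) := by
        rw [ENNReal.tsum_mul_left, ENNReal.tsum_add, ENNReal.tsum_add,
          tsum_comp_sub_sub_fst (pairWeight t u n), tsum_comp_sub_sub_snd (pairWeight t u n)]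
        ring
    _ ≤ ENNReal.ofReal (3 ^ t) * jbDecay t n * (3 * (C * jbDecay (2 * u) n)) := by
        gcongr; exact h n
    _ = _ := by rw [← jbDecay_mul_jbDecay]; ring

lemma mOne_nonneg (s : ℝ) (n₁ n₂ n₃ : ℤ) : 0 ≤ mOne s n₁ n₂ n₃ := by
  unfold mOne jb; positivity

lemma ofReal_mOne (s : ℝ) (n₁ n₂ n₃ : ℤ) :
    ENNReal.ofReal (mOne s n₁ n₂ n₃) =
      ENNReal.ofReal (jb (n₁ + n₂ + n₃ : ℤ) ^ s * |((n₁ + n₂ + n₃ : ℤ) : ℝ)|) *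
        (jbDecay s n₁ * jbDecay s n₂ * jbDecay s n₃ * jbDecay (1 / 2) (n₂ + n₃) *
          jbDecay (1 / 2) (n₃ + n₁) * jbDecay (1 / 2) (n₁ + n₂)) := by
  simp only [mOne, jbDecay, div_eq_mul_inv, mul_inv, Real.rpow_neg (jb_pos _).le]
  simp only [jb]
  simp (disch := positivity) only [ENNReal.ofReal_mul]

lemma ofReal_mOne_rpow_le {s p' : ℝ} (hp' : 0 ≤ p') (n y z : ℤ) :
    ENNReal.ofReal (mOne s y z (n - y - z)) ^ p' ≤
      ENNReal.ofReal (jb n ^ ((s + 1) * p')) * kernelWeight (s * p') (1 / 2 * p') n (y, z) := by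
  rw [kernelWeight, ofReal_mOne, show y + z + (n - y - z) = n by ring,
    show z + (n - y - z) = n - y by ring, show n - y - z + y = n - z by ring]
  simp only [ENNReal.mul_rpow_of_nonneg _ _ hp', jbDecay_rpow _ hp']
  gcongr
  rw [ENNReal.ofReal_rpow_of_nonneg (by positivity [jb_pos (n : ℝ)]) hp',
    Real.rpow_mul (jb_pos _).le, Real.rpow_add_one (jb_pos _).ne']
  have hjb : 0 ≤ jb n ^ s := by positivity [jb_pos (n : ℝ)]
  exact ENNReal.ofReal_le_ofReal (Real.rpow_le_rpow (by positivity [abs_nonneg (n : ℝ)])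
    (mul_le_mul_of_nonneg_left (abs_le_jb _) hjb) hp')

lemma ofReal_jb_rpow_mul_jbDecay (r : ℝ) (n : ℤ) : ENNReal.ofReal (jb n ^ r) * jbDecay r n = 1 := by
  rw [jbDecay, ← ENNReal.ofReal_mul (Real.rpow_nonneg (jb_pos _).le _),
    ← Real.rpow_add (jb_pos _), add_neg_cancel, Real.rpow_zero, ENNReal.ofReal_one]

theorem exists_tsum_ofReal_mOne_rpow_le {s p' : ℝ} (hs : 1 / 4 ≤ s) (hp' : 1 < p' * (s + 1 / 4)) :
    ∃ C ≠ ∞, ∀ n : ℤ,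
      ∑' q : ℤ × ℤ, ENNReal.ofReal (mOne s q.1 q.2 (n - q.1 - q.2)) ^ p' ≤ C := by
  have hp'0 : 0 < p' := by nlinarith
  obtain ⟨C, hC, h⟩ := exists_tsum_kernelWeight_le (t := s * p') (u := 1 / 2 * p')
    (by positivity) (by nlinarith) (by nlinarith)
  refine ⟨C, hC, fun n => ?_⟩
  calc _ ≤ ∑' q : ℤ × ℤ,
        ENNReal.ofReal (jb n ^ ((s + 1) * p')) * kernelWeight (s * p') (1 / 2 * p') n q :=
        ENNReal.tsum_le_tsum fun q => ofReal_mOne_rpow_le hp'0.le n q.1 q.2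
    _ ≤ ENNReal.ofReal (jb n ^ ((s + 1) * p')) * (C * jbDecay (s * p' + 2 * (1 / 2 * p')) n) := by
        rw [ENNReal.tsum_mul_left]; gcongr; exact h n
    _ = C := by
        rw [show s * p' + 2 * (1 / 2 * p') = (s + 1) * p' by ring, mul_left_comm,
          ofReal_jb_rpow_mul_jbDecay, mul_one]

lemma ENNReal.inner_le_Lp_mul_Lq_tsum {ι : Type*} {p q : ℝ} (hpq : p.HolderConjugate q)
    (f g : ι → ℝ≥0∞) :
    ∑' i, f i * g i ≤ (∑' i, f i ^ p) ^ (1 / p) * (∑' i, g i ^ q) ^ (1 / q) := by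
  let _ : MeasurableSpace ι := ⊤
  simpa only [lintegral_count, Pi.mul_apply] using
    ENNReal.lintegral_mul_le_Lp_mul_Lq (Measure.count : Measure ι) hpq
      (measurable_from_top (f := f)).aemeasurable (measurable_from_top (f := g)).aemeasurable

lemma eLpNorm_count_eq_tsum {α : Type*} [MeasurableSpace α] [MeasurableSingletonClass α]
    {p : ℝ≥0∞} (hp₀ : p ≠ 0) (hp : p ≠ ∞) (f : α → ℂ) :
    eLpNorm f p Measure.count = (∑' k, ‖f k‖ₑ ^ p.toReal) ^ (1 / p.toReal) := by
  rw [eLpNorm_eq_lintegral_rpow_enorm_toReal hp₀ hp, lintegral_count]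

lemma tsum_tsum_mul_mul_sub_sub (f g h : ℤ → ℝ≥0∞) :
    ∑' n : ℤ, ∑' q : ℤ × ℤ, f q.1 * g q.2 * h (n - q.1 - q.2) =
      (∑' k, f k) * (∑' k, g k) * ∑' k, h k := by
  rw [ENNReal.tsum_comm]
  calc _ = ∑' q : ℤ × ℤ, f q.1 * g q.2 * ∑' k, h k := by
        refine tsum_congr fun q => ?_
        rw [ENNReal.tsum_mul_left]
        simp only [sub_sub, tsum_comp_sub_right h]
    _ = _ := by
        rw [ENNReal.tsum_mul_right, ENNReal.tsum_prod (f := fun a b => f a * g b)]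
        simp only [ENNReal.tsum_mul_left, ENNReal.tsum_mul_right]

section Trilinear

variable {K : ℤ → ℤ × ℤ → ℂ} {a₁ a₂ a₃ : ℤ → ℂ} {M : ℝ≥0∞}

lemma enorm_tsum_trilinear_le (n : ℤ) :
    ‖∑' q : ℤ × ℤ, K n q * a₁ q.1 * a₂ q.2 * a₃ (n - q.1 - q.2)‖ₑ ≤
      ∑' q : ℤ × ℤ, ‖K n q‖ₑ * (‖a₁ q.1‖ₑ * ‖a₂ q.2‖ₑ * ‖a₃ (n - q.1 - q.2)‖ₑ) :=
  enorm_tsum_le_tsum_enorm.trans_eq (tsum_congr fun q => by simp only [enorm_mul]; ring)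

lemma eLpNorm_top_trilinear_le (hK : ∀ n, ∑' q, ‖K n q‖ₑ ≤ M) :
    eLpNorm (fun n => ∑' q : ℤ × ℤ, K n q * a₁ q.1 * a₂ q.2 * a₃ (n - q.1 - q.2)) ∞
        Measure.count ≤
      M * eLpNorm a₁ ∞ Measure.count * eLpNorm a₂ ∞ Measure.count *
        eLpNorm a₃ ∞ Measure.count := by
  rw [eLpNorm_exponent_top, eLpNormEssSup_count]
  refine iSup_le fun n => ?_
  calc _ ≤ _ := enorm_tsum_trilinear_le n
    _ ≤ ∑' q, ‖K n q‖ₑ * (eLpNorm a₁ ∞ Measure.count * eLpNorm a₂ ∞ Measure.count *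
          eLpNorm a₃ ∞ Measure.count) := by
        gcongr <;> exact enorm_le_eLpNorm_count _ _ ENNReal.top_ne_zero
    _ ≤ _ := by
        rw [ENNReal.tsum_mul_right, ← mul_assoc, ← mul_assoc]
        gcongr
        exact hK n

lemma eLpNorm_ofReal_trilinear_le {P p' : ℝ} (hP : P.HolderConjugate p')
    (hK : ∀ n, ∑' q, ‖K n q‖ₑ ^ p' ≤ M) :
    eLpNorm (fun n => ∑' q : ℤ × ℤ, K n q * a₁ q.1 * a₂ q.2 * a₃ (n - q.1 - q.2))
        (ENNReal.ofReal P) Measure.count ≤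
      M ^ (1 / p') * eLpNorm a₁ (ENNReal.ofReal P) Measure.count *
        eLpNorm a₂ (ENNReal.ofReal P) Measure.count *
          eLpNorm a₃ (ENNReal.ofReal P) Measure.count := by
  have hP₀ : 0 < P := hP.pos
  have hp'₀ : 0 < p' := hP.symm.pos
  simp only [eLpNorm_count_eq_tsum (ENNReal.ofReal_pos.2 hP₀).ne' ENNReal.ofReal_ne_top,
    ENNReal.toReal_ofReal hP₀.le]
  set G : ℤ → ℝ≥0∞ := fun n =>
    ∑' q : ℤ × ℤ, ‖a₁ q.1‖ₑ ^ P * ‖a₂ q.2‖ₑ ^ P * ‖a₃ (n - q.1 - q.2)‖ₑ ^ P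
  -- Hölder in `q` for each fixed `n`, with the kernel in `ℓ^{p'}`
  have hpt (n : ℤ) :
      ‖∑' q : ℤ × ℤ, K n q * a₁ q.1 * a₂ q.2 * a₃ (n - q.1 - q.2)‖ₑ ^ P ≤
        (M ^ (1 / p')) ^ P * G n := by
    calc _ ≤ ((∑' q, ‖K n q‖ₑ ^ p') ^ (1 / p') * G n ^ (1 / P)) ^ P := by
          gcongr
          refine (enorm_tsum_trilinear_le n).trans ?_
          simpa only [G, ENNReal.mul_rpow_of_nonneg _ _ hP₀.le]
            using ENNReal.inner_le_Lp_mul_Lq_tsum hP.symm (fun q => ‖K n q‖ₑ)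
              (fun q => ‖a₁ q.1‖ₑ * ‖a₂ q.2‖ₑ * ‖a₃ (n - q.1 - q.2)‖ₑ)
      _ ≤ (M ^ (1 / p') * G n ^ (1 / P)) ^ P := by gcongr; exact hK n
      _ = _ := by
          rw [ENNReal.mul_rpow_of_nonneg _ _ hP₀.le, one_div P, ENNReal.rpow_inv_rpow hP₀.ne']
  calc _ ≤ (∑' n, (M ^ (1 / p')) ^ P * G n) ^ (1 / P) := by
        gcongr with n; exact hpt n
    _ = _ := by
        have hG : ∑' n, G n = (∑' k, ‖a₁ k‖ₑ ^ P) * (∑' k, ‖a₂ k‖ₑ ^ P) * ∑' k, ‖a₃ k‖ₑ ^ P :=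
          tsum_tsum_mul_mul_sub_sub (‖a₁ ·‖ₑ ^ P) (‖a₂ ·‖ₑ ^ P) (‖a₃ ·‖ₑ ^ P)
        rw [ENNReal.tsum_mul_left, hG, ENNReal.mul_rpow_of_nonneg _ _
          (by positivity), ENNReal.mul_rpow_of_nonneg _ _ (by positivity),
          ENNReal.mul_rpow_of_nonneg _ _ (by positivity), one_div P, ENNReal.rpow_rpow_inv hP₀.ne']
        ring

theorem eLpNorm_trilinear_le {p : ℝ≥0∞} {p' : ℝ} [hpp' : p.HolderConjugate (ENNReal.ofReal p')]
    (hK : ∀ n, ∑' q, ‖K n q‖ₑ ^ p' ≤ M) :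
    eLpNorm (fun n => ∑' q : ℤ × ℤ, K n q * a₁ q.1 * a₂ q.2 * a₃ (n - q.1 - q.2)) p
        Measure.count ≤
      M ^ (1 / p') * eLpNorm a₁ p Measure.count * eLpNorm a₂ p Measure.count *
        eLpNorm a₃ p Measure.count := by
  rcases eq_or_ne p ∞ with rfl | hp
  · obtain rfl : p' = 1 :=
      ENNReal.ofReal_eq_one.1 ((ENNReal.HolderConjugate.eq_top_iff_eq_one _ _).1 rfl)
    simpa using eLpNorm_top_trilinear_le (by simpa using hK)
  · have hp' : 1 ≤ p' :=
      ENNReal.one_le_ofReal.1 (ENNReal.HolderConjugate.one_le (ENNReal.ofReal p') p)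
    have hP : p.toReal.HolderConjugate p' := by
      simpa [ENNReal.toReal_ofReal (zero_le_one.trans hp')] using
        ENNReal.HolderConjugate.toReal_of_ne_top (q := ENNReal.ofReal p') hp ENNReal.ofReal_ne_top
    rw [← ENNReal.ofReal_toReal hp]
    exact eLpNorm_ofReal_trilinear_le hP hK

end Trilinear

theorem nonresonant_trilinear_bound_general (s p' : ℝ) (hs : 1/4 ≤ s)
    (hp' : 1 < p' * (s + 1/4)) (p : ℝ≥0∞)
    (hconj : 1 / p + 1 / ENNReal.ofReal p' = 1) :
    ∃ C : ℝ, 0 < C ∧ ∀ a₁ a₂ a₃ : ℤ → ℂ,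
      eLpNorm (fun n : ℤ => ∑' q : ℤ × ℤ,
          if q.1 ≠ n ∧ q.2 ≠ n ∧ n - q.1 - q.2 ≠ n then
            (mOne s q.1 q.2 (n - q.1 - q.2) : ℂ)
              * a₁ q.1 * a₂ q.2 * a₃ (n - q.1 - q.2)
          else 0) p (Measure.count : Measure ℤ)
        ≤ ENNReal.ofReal C
          * eLpNorm a₁ p (Measure.count : Measure ℤ)
          * eLpNorm a₂ p (Measure.count : Measure ℤ)
          * eLpNorm a₃ p (Measure.count : Measure ℤ) := by
  have hpq : p.HolderConjugate (ENNReal.ofReal p') :=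
    ENNReal.holderConjugate_iff.2 (by simpa only [one_div] using hconj)
  have hp'₀ : 0 < p' := by nlinarith
  obtain ⟨M, hM, hK⟩ := exists_tsum_ofReal_mOne_rpow_le hs hp'
  let K : ℤ → ℤ × ℤ → ℂ := fun n q =>
    if q.1 ≠ n ∧ q.2 ≠ n ∧ n - q.1 - q.2 ≠ n then (mOne s q.1 q.2 (n - q.1 - q.2) : ℂ) else 0
  have hKM (n : ℤ) : ∑' q, ‖K n q‖ₑ ^ p' ≤ ENNReal.ofReal (M.toReal + 1) := by
    refine le_trans (ENNReal.tsum_le_tsum fun q => ?_) ((hK n).trans ?_)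
    · simp only [K]
      split_ifs
      · rw [← ofReal_norm, Complex.norm_real, Real.norm_of_nonneg (mOne_nonneg _ _ _ _)]
      · simp [hp'₀]
    · exact (ENNReal.le_ofReal_iff_toReal_le hM (by positivity)).2 (by linarith)
  refine ⟨(M.toReal + 1) ^ (1 / p'), by positivity, fun a₁ a₂ a₃ => ?_⟩
  rw [← ENNReal.ofReal_rpow_of_pos (by positivity)]
  convert eLpNorm_trilinear_le (hpp' := hpq) (a₁ := a₁) (a₂ := a₂) (a₃ := a₃) hKM using 4 with n
  funext q
  simp only [K]
  split_ifs <;> simp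

/-- Proposition 3.3: the nonresonant trilinear operator `S₁` is bounded from
`ℓᵖ(ℤ)³` to `ℓᵖ(ℤ)` when `s ≥ 1/4` and `p'(s+1/4) > 1`, `p'` the conjugate
exponent of `p`. -/
theorem nonresonant_trilinear_bound (s p' : ℝ) (hs : 1/4 ≤ s) (hp'1 : 1 ≤ p')
    (hp' : 1 < p' * (s + 1/4)) (p : ℝ≥0∞) (hp : 1 ≤ p)
    (hconj : 1 / p + 1 / ENNReal.ofReal p' = 1) :
    ∃ C : ℝ, 0 < C ∧ ∀ a₁ a₂ a₃ : ℤ → ℂ,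
      eLpNorm (fun n : ℤ => ∑' q : ℤ × ℤ,
          if q.1 ≠ n ∧ q.2 ≠ n ∧ n - q.1 - q.2 ≠ n then
            (mOne s q.1 q.2 (n - q.1 - q.2) : ℂ)
              * a₁ q.1 * a₂ q.2 * a₃ (n - q.1 - q.2)
          else 0) p (Measure.count : Measure ℤ)
        ≤ ENNReal.ofReal C
          * eLpNorm a₁ p (Measure.count : Measure ℤ)
          * eLpNorm a₂ p (Measure.count : Measure ℤ)
          * eLpNorm a₃ p (Measure.count : Measure ℤ) :=
  nonresonant_trilinear_bound_general s p' hs hp' p hconj
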